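/- For $1<p<\infty$ and $u \in \Phi^{1,p}_0(\Omega)$ and $t \ne 0$, the norm estimate $\|\nabla[\varphi_p(tu)]\|_p \le |t|\,\left\{\frac{[1+2(\log|t|)^-]^2}{\min\{|t|,1\}}\right\}^{1/p} \|\nabla[\varphi_p(u)]\|_p$ holds, assuming the pointwise bound $[\varphi_p'(ts)]^p |t|^p \le |t|^{p-1}(1-2\log|t|)^2 [\varphi_p'(s)]^p \cdot |t|^p / |t|^{p}$ established for $0<|t|\le 1$ and the monotonicity $\varphi_p'(|t|s) \le \varphi_p'(s)$ for $|t| \ge 1$, $s \ge 0$. Concretely: for $|t| \ge 1$, $\|\nabla[\varphi_p(tu)]\|_p \le |t| \|\nabla[\varphi_p(u)]\|_p$, and for $0<|t|\le 1$, $\|\nabla[\varphi_p(tu)]\|_p^p \le |t|^{p-1}(1-2\log|t|)^2 \|\nabla[\varphi_p(u)]\|_p^p$. -/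

import Mathlib

/-!
Write `φ_p'(s) = W(s²)^{-1/(2p)}` with `W(x) = (1 + x) (log (e + x))⁴ ≥ 1`,
so that `φ_p'(s)^p = W(s²)^{-1/2}`.
For `|t| ≥ 1` the weight is monotone, hence `φ_p'(ts) ≤ φ_p'(s)` and the bound is pointwise.
For `a = t² ≤ 1` one has `e + x ≤ (e + a x) / a`, whence `log (e + x) ≤ (1 - log a) log (e + a x)`
and `a W(x) ≤ (1 - log a)⁴ W(a x)`; taking square roots gives
`|t| φ_p'(ts)^p ≤ (1 - 2 log |t|)² φ_p'(s)^p`, and both estimates integrate over `Ω`.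
-/

open Real MeasureTheory

lemma one_le_log_exp_one_add {x : ℝ} (hx : 0 ≤ x) : 1 ≤ log (exp 1 + x) := by
  simpa using log_le_log (exp_pos 1) (le_add_of_nonneg_right hx : exp 1 ≤ exp 1 + x)

lemma log_exp_one_add_le_mul_log {a x : ℝ} (ha₀ : 0 < a) (ha₁ : a ≤ 1) (hx : 0 ≤ x) :
    log (exp 1 + x) ≤ (1 - log a) * log (exp 1 + a * x) := by
  have hpos : 0 < exp 1 + a * x := by positivity
  have hle : exp 1 + x ≤ (exp 1 + a * x) / a := by
    rw [le_div_iff₀ ha₀]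
    nlinarith [exp_pos 1]
  have hlog : log (exp 1 + x) ≤ log (exp 1 + a * x) - log a := by
    rw [← log_div hpos.ne' ha₀.ne']
    exact log_le_log (by positivity) hle
  nlinarith [one_le_log_exp_one_add (mul_nonneg ha₀.le hx), log_nonpos ha₀.le ha₁]

/-- In terms of the paper's `φ_p`, `φ_p'(s) = logWeight (s ^ 2) ^ (-(1 / (2 * p)))`. -/
noncomputable def logWeight (x : ℝ) : ℝ := (1 + x) * log (exp 1 + x) ^ 4

lemma one_le_logWeight {x : ℝ} (hx : 0 ≤ x) : 1 ≤ logWeight x :=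
  one_le_mul_of_one_le_of_one_le (by linarith) (one_le_pow₀ (one_le_log_exp_one_add hx))

lemma logWeight_pos {x : ℝ} (hx : 0 ≤ x) : 0 < logWeight x :=
  one_pos.trans_le (one_le_logWeight hx)

lemma logWeight_le_logWeight {x y : ℝ} (hx : 0 ≤ x) (hxy : x ≤ y) :
    logWeight x ≤ logWeight y := by
  have hlog : log (exp 1 + x) ≤ log (exp 1 + y) := log_le_log (by positivity) (by linarith)
  have hlog₀ : 0 ≤ log (exp 1 + x) := zero_le_one.trans (one_le_log_exp_one_add hx)
  unfold logWeight
  gcongr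
  linarith

lemma mul_logWeight_le {a x : ℝ} (ha₀ : 0 ≤ a) (ha₁ : a ≤ 1) (hx : 0 ≤ x) :
    a * logWeight x ≤ (1 - log a) ^ 4 * logWeight (a * x) := by
  rcases ha₀.eq_or_lt with rfl | ha₀
  · simpa using (logWeight_pos le_rfl).le
  have hlog₀ : 0 ≤ log (exp 1 + x) := zero_le_one.trans (one_le_log_exp_one_add hx)
  have hlog := log_exp_one_add_le_mul_log ha₀ ha₁ hx
  calc a * logWeight x = (a * (1 + x)) * log (exp 1 + x) ^ 4 := by
        unfold logWeight; ring
    _ ≤ (1 + a * x) * ((1 - log a) * log (exp 1 + a * x)) ^ 4 := by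
        gcongr
        nlinarith
    _ = (1 - log a) ^ 4 * logWeight (a * x) := by
        unfold logWeight; ring

lemma abs_div_sqrt_logWeight_le {t : ℝ} (ht : |t| ≤ 1) (s : ℝ) :
    |t| / √(logWeight ((t * s) ^ 2)) ≤ (1 - 2 * log |t|) ^ 2 / √(logWeight (s ^ 2)) := by
  have hK : (1 - 2 * log |t|) ^ 2 = (1 - log (t ^ 2)) ^ 2 := by
    rw [log_pow, log_abs]; push_cast; ring
  have hkey := mul_logWeight_le (sq_nonneg t) (by nlinarith [sq_abs t, abs_nonneg t])
    (sq_nonneg s)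
  rw [← mul_pow] at hkey
  have hA := logWeight_pos (sq_nonneg (t * s))
  have hB := logWeight_pos (sq_nonneg s)
  rw [div_le_div_iff₀ (sqrt_pos.2 hA) (sqrt_pos.2 hB), hK, ← sqrt_sq_eq_abs,
    ← sqrt_sq (sq_nonneg (1 - log (t ^ 2))), ← sqrt_mul (sq_nonneg _),
    ← sqrt_mul (sq_nonneg _)]
  exact sqrt_le_sqrt (by rw [← pow_mul]; exact hkey)

section Pointwise

variable {p : ℝ} {φ' : ℝ → ℝ} (hφ' : ∀ s, φ' s = logWeight (s ^ 2) ^ (-(1 / (2 * p))))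
include hφ'

lemma phiDeriv_rpow_eq_inv_sqrt (hp : p ≠ 0) (s : ℝ) :
    φ' s ^ p = (√(logWeight (s ^ 2)))⁻¹ := by
  have hW := (logWeight_pos (sq_nonneg s)).le
  rw [hφ', ← rpow_mul hW, sqrt_eq_rpow, ← rpow_neg hW]
  congr 1
  field_simp

lemma phiDeriv_nonneg (s : ℝ) : 0 ≤ φ' s := by
  rw [hφ']
  exact rpow_nonneg (logWeight_pos (sq_nonneg s)).le _

lemma phiDeriv_mul_le_of_one_le_abs (hp : 0 ≤ p) {t : ℝ} (ht : 1 ≤ |t|) (s : ℝ) :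
    φ' (t * s) ≤ φ' s := by
  rw [hφ', hφ']
  refine rpow_le_rpow_of_nonpos (logWeight_pos (sq_nonneg s)) ?_ (neg_nonpos.2 (by positivity))
  refine logWeight_le_logWeight (sq_nonneg s) ?_
  rw [mul_pow]
  exact le_mul_of_one_le_left (sq_nonneg s) (by nlinarith [sq_abs t])

lemma rpow_phiDeriv_mul_le_of_one_le_abs (hp : 0 ≤ p) {t : ℝ} (ht : 1 ≤ |t|) (s : ℝ)
    {d : ℝ} (hd : 0 ≤ d) :
    (φ' (t * s) * (|t| * d)) ^ p ≤ |t| ^ p * (φ' s * d) ^ p := by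
  rw [← mul_rpow (abs_nonneg t) (mul_nonneg (phiDeriv_nonneg hφ' s) hd)]
  refine rpow_le_rpow (mul_nonneg (phiDeriv_nonneg hφ' _) (mul_nonneg (abs_nonneg t) hd)) ?_ hp
  calc φ' (t * s) * (|t| * d) ≤ φ' s * (|t| * d) := by
        gcongr; exact phiDeriv_mul_le_of_one_le_abs hφ' hp ht s
    _ = |t| * (φ' s * d) := by ring

lemma rpow_phiDeriv_mul_le_of_abs_le_one (hp : p ≠ 0) {t : ℝ} (ht : |t| ≤ 1) (s : ℝ)
    {d : ℝ} (hd : 0 ≤ d) :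
    (φ' (t * s) * (|t| * d)) ^ p ≤
      |t| ^ (p - 1) * (1 - 2 * log |t|) ^ 2 * (φ' s * d) ^ p := by
  have hsplit : |t| ^ p = |t| ^ (p - 1) * |t| := by
    simpa using rpow_add' (y := p - 1) (z := 1) (abs_nonneg t) (by simpa using hp)
  rw [mul_rpow (phiDeriv_nonneg hφ' _) (mul_nonneg (abs_nonneg t) hd), mul_rpow (abs_nonneg t) hd,
    mul_rpow (phiDeriv_nonneg hφ' _) hd, phiDeriv_rpow_eq_inv_sqrt hφ' hp,
    phiDeriv_rpow_eq_inv_sqrt hφ' hp, hsplit]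
  have key := abs_div_sqrt_logWeight_le ht s
  rw [div_eq_inv_mul, div_eq_mul_inv] at key
  calc (√(logWeight ((t * s) ^ 2)))⁻¹ * (|t| ^ (p - 1) * |t| * d ^ p)
      = |t| ^ (p - 1) * ((√(logWeight ((t * s) ^ 2)))⁻¹ * |t|) * d ^ p := by ring
    _ ≤ |t| ^ (p - 1) * ((1 - 2 * log |t|) ^ 2 * (√(logWeight (s ^ 2)))⁻¹) * d ^ p := by
        gcongr
    _ = _ := by ring

end Pointwise

lemma lintegral_ofReal_le_ofReal_mul {α : Type*} [MeasurableSpace α] (μ : Measure α)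
    {f g : α → ℝ} {C : ℝ} (hC : 0 ≤ C) (h : ∀ x, f x ≤ C * g x) :
    ∫⁻ x, ENNReal.ofReal (f x) ∂μ ≤ ENNReal.ofReal C * ∫⁻ x, ENNReal.ofReal (g x) ∂μ := by
  rw [← lintegral_const_mul' _ _ ENNReal.ofReal_ne_top]
  refine lintegral_mono fun x => ?_
  rw [← ENNReal.ofReal_mul hC]
  exact ENNReal.ofReal_le_ofReal (h x)

theorem stmt13_general (N : ℕ) (p : ℝ) (hp : 1 < p)
    (Ω : Set (EuclideanSpace ℝ (Fin N)))
    (φ' : ℝ → ℝ)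
    (hφ' : ∀ s : ℝ, φ' s =
      ((1 + s ^ 2) * (Real.log (Real.exp 1 + s ^ 2)) ^ 4) ^ (-(1 / (2 * p))))
    (u : EuclideanSpace ℝ (Fin N) → ℝ)
    (Du : EuclideanSpace ℝ (Fin N) → EuclideanSpace ℝ (Fin N))
    (t : ℝ) :
    (1 ≤ |t| →
      (∫⁻ x in Ω, ENNReal.ofReal ((φ' (t * u x) * (|t| * ‖Du x‖)) ^ p)) ≤
        ENNReal.ofReal (|t| ^ p) *
          ∫⁻ x in Ω, ENNReal.ofReal ((φ' (u x) * ‖Du x‖) ^ p)) ∧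
    (|t| ≤ 1 →
      (∫⁻ x in Ω, ENNReal.ofReal ((φ' (t * u x) * (|t| * ‖Du x‖)) ^ p)) ≤
        ENNReal.ofReal (|t| ^ (p - 1) * (1 - 2 * Real.log |t|) ^ 2) *
          ∫⁻ x in Ω, ENNReal.ofReal ((φ' (u x) * ‖Du x‖) ^ p)) := by
  have hφ : ∀ s, φ' s = logWeight (s ^ 2) ^ (-(1 / (2 * p))) := hφ'
  refine ⟨fun ht₁ => ?_, fun ht₁ => ?_⟩
  · exact lintegral_ofReal_le_ofReal_mul _ (by positivity) fun x =>
      rpow_phiDeriv_mul_le_of_one_le_abs hφ (by linarith) ht₁ (u x) (norm_nonneg _)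
  · exact lintegral_ofReal_le_ofReal_mul _ (by positivity) fun x =>
      rpow_phiDeriv_mul_le_of_abs_le_one hφ (by linarith) ht₁ (u x) (norm_nonneg _)

/-- the norm estimate for `φ_p(tu)` (Proposition 2.3), in the
reduced integral form. With `φ_p'(s) = ((1+s²)(log(e+s²))⁴)^{-1/(2p)}` and the
chain rule `∇[φ_p(tu)] = φ_p'(tu) t ∇u` (so `|∇[φ_p(tu)]| = φ_p'(tu)|t||∇u|`),
for `t ≠ 0` one has: if `|t| ≥ 1` then
`∫_Ω |∇[φ_p(tu)]|^p ≤ |t|^p ∫_Ω |∇[φ_p(u)]|^p`, and if `0 < |t| ≤ 1` then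
`∫_Ω |∇[φ_p(tu)]|^p ≤ |t|^{p-1}(1-2log|t|)² ∫_Ω |∇[φ_p(u)]|^p`. -/
theorem stmt13 (N : ℕ) (hN : 1 ≤ N) (p : ℝ) (hp : 1 < p)
    (Ω : Set (EuclideanSpace ℝ (Fin N))) (hΩo : IsOpen Ω)
    (hΩb : Bornology.IsBounded Ω)
    (φ' : ℝ → ℝ)
    (hφ' : ∀ s : ℝ, φ' s =
      ((1 + s ^ 2) * (Real.log (Real.exp 1 + s ^ 2)) ^ 4) ^ (-(1 / (2 * p))))
    (u : EuclideanSpace ℝ (Fin N) → ℝ)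
    (Du : EuclideanSpace ℝ (Fin N) → EuclideanSpace ℝ (Fin N))
    (t : ℝ) (ht : t ≠ 0) :
    (1 ≤ |t| →
      (∫⁻ x in Ω, ENNReal.ofReal ((φ' (t * u x) * (|t| * ‖Du x‖)) ^ p)) ≤
        ENNReal.ofReal (|t| ^ p) *
          ∫⁻ x in Ω, ENNReal.ofReal ((φ' (u x) * ‖Du x‖) ^ p)) ∧
    (|t| ≤ 1 →
      (∫⁻ x in Ω, ENNReal.ofReal ((φ' (t * u x) * (|t| * ‖Du x‖)) ^ p)) ≤
        ENNReal.ofReal (|t| ^ (p - 1) * (1 - 2 * Real.log |t|) ^ 2) *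
          ∫⁻ x in Ω, ENNReal.ofReal ((φ' (u x) * ‖Du x‖) ^ p)) :=
  stmt13_general N p hp Ω φ' hφ' u Du t
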